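/- The marginal independence graph of any DAG is edge-simplicial: every edge of the marginal independence graph of a DAG lies in a clique of the form Bd(v) for some simplicial vertex v. -/

import Mathlib

/-- `w` is an ancestor of `u` in the directed graph `R` (every node is its own ancestor). -/
def Ancestor {V : Type*} (R : V → V → Prop) (w u : V) : Prop :=
  Relation.ReflTransGen R w u

/-- `u` and `v` have a common ancestor in `R`. -/
def CommonAnc {V : Type*} (R : V → V → Prop) (u v : V) : Prop :=
  ∃ w, Ancestor R w u ∧ Ancestor R w v

/-- `R` is acyclic (a DAG): no directed cycle. -/
def Acyclic {V : Type*} (R : V → V → Prop) : Prop :=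
  ∀ v, ¬ Relation.TransGen R v v

/-- The DAG `R` is faithful to the undirected graph `U`: distinct nodes are
adjacent in `U` iff they have a common ancestor in `R`. -/
def Faithful {V : Type*} (R : V → V → Prop) (U : SimpleGraph V) : Prop :=
  ∀ u v, u ≠ v → (U.Adj u v ↔ CommonAnc R u v)

/-- Closed neighborhood of `v` in `U`. -/
def Bd {V : Type*} (U : SimpleGraph V) (v : V) : Set V :=
  insert v (U.neighborSet v)

/-- `v` is simplicial in `U`: its closed neighborhood is a clique. -/
def Simplicial {V : Type*} (U : SimpleGraph V) (v : V) : Prop :=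
  U.IsClique (Bd U v)

/-!
The endpoints of an edge `uv` have a common ancestor, and in a finite DAG that ancestor has a
source `s` among its own ancestors. A node adjacent to a source shares an ancestor with it, which
can only be `s` itself; so `Bd(s)` is exactly the set of descendants of `s`. It therefore
contains `u` and `v`, and it is a clique because `s` is a common ancestor of any two of its members.
-/

def IsSource {V : Type*} (R : V → V → Prop) (s : V) : Prop :=
  ∀ x, ¬ R x s

section Source

variable {V : Type*} {R : V → V → Prop}

theorem IsSource.eq_of_ancestor {s x : V} (hs : IsSource R s) (hx : Ancestor R x s) : x = s :=
  match hx.cases_tail with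
  | .inl h => h.symm
  | .inr ⟨_, _, hcs⟩ => absurd hcs (hs _)

theorem Acyclic.wellFounded [Finite V] (hacyc : Acyclic R) : WellFounded R :=
  have : Std.Irrefl (Relation.TransGen R) := ⟨hacyc⟩
  Subrelation.wf Relation.TransGen.single (Finite.wellFounded_of_trans_of_irrefl _)

theorem Acyclic.exists_source_ancestor [Finite V] (hacyc : Acyclic R) (w : V) :
    ∃ s, IsSource R s ∧ Ancestor R s w := by
  obtain ⟨s, hsw, hmin⟩ :=
    hacyc.wellFounded.has_min {x | Ancestor R x w} ⟨w, Relation.ReflTransGen.refl⟩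
  exact ⟨s, fun x hxs => hmin x (Relation.ReflTransGen.head hxs hsw) hxs, hsw⟩

end Source

section Faithful

variable {V : Type*} {R : V → V → Prop} {U : SimpleGraph V}

theorem Faithful.mem_bd_of_ancestor (hfaith : Faithful R U) {s a : V} (ha : Ancestor R s a) :
    a ∈ Bd U s := by
  rcases eq_or_ne s a with rfl | hsa
  · exact Set.mem_insert _ _
  · exact Set.mem_insert_of_mem _ ((hfaith s a hsa).mpr ⟨s, Relation.ReflTransGen.refl, ha⟩)

theorem Faithful.ancestor_of_mem_bd (hfaith : Faithful R U) {s a : V} (hs : IsSource R s)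
    (ha : a ∈ Bd U s) : Ancestor R s a := by
  rcases ha with rfl | hadj
  · exact Relation.ReflTransGen.refl
  · obtain ⟨x, hxs, hxa⟩ := (hfaith s a hadj.ne).mp hadj
    exact hs.eq_of_ancestor hxs ▸ hxa

theorem Faithful.simplicial_of_isSource (hfaith : Faithful R U) {s : V} (hs : IsSource R s) :
    Simplicial U s := fun a ha b hb hab =>
  (hfaith a b hab).mpr ⟨s, hfaith.ancestor_of_mem_bd hs ha, hfaith.ancestor_of_mem_bd hs hb⟩

end Faithful

theorem stmt12 {V : Type*} [Fintype V] (R : V → V → Prop) (U : SimpleGraph V)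
    (hacyc : Acyclic R) (hfaith : Faithful R U) :
    ∀ u v, U.Adj u v → ∃ s, Simplicial U s ∧ u ∈ Bd U s ∧ v ∈ Bd U s := by
  intro u v huv
  obtain ⟨w, hwu, hwv⟩ := (hfaith u v huv.ne).mp huv
  obtain ⟨s, hs, hsw⟩ := hacyc.exists_source_ancestor w
  exact ⟨s, hfaith.simplicial_of_isSource hs, hfaith.mem_bd_of_ancestor (hsw.trans hwu),
    hfaith.mem_bd_of_ancestor (hsw.trans hwv)⟩
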